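/- Let s be a positive integer and p₂ := (s−1)(2s−1)+1. Let G be the finite simple graph whose vertex set is the disjoint union of a set U = {u₁,…,u_s} of size s and two disjoint sets C₁, C₂ each of size p₂, in which two distinct vertices are adjacent if and only if they both lie in U, or they both lie in the same set Cᵢ, or one lies in U and the other lies in C₁ ∪ C₂. Then the smallest eigenvalue of the adjacency matrix of G is strictly less than −s. -/

import Mathlib

/-- Auxiliary projection: `none` for vertices of `U`, `some i` for vertices of clique `Cᵢ`. -/
def uCliquesProj {s t p : ℕ} : Fin s ⊕ (Fin t × Fin p) → Option (Fin t)
  | Sum.inl _ => none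
  | Sum.inr x => some x.1

/-- The graph consisting of a clique `U` of order `s`, and `t` pairwise disjoint cliques
`C₁, …, C_t` of order `p` (with no edges between distinct cliques `Cᵢ`),
where every vertex of `U` is adjacent to every vertex of every `Cᵢ`. -/
def cliqueJoinCliques (s t p : ℕ) : SimpleGraph (Fin s ⊕ (Fin t × Fin p)) where
  Adj a b := a ≠ b ∧ (uCliquesProj a = none ∨ uCliquesProj b = none ∨
      uCliquesProj a = uCliquesProj b)
  symm := by
    constructor
    intro a b h
    exact ⟨Ne.symm h.1, by tauto⟩
  loopless := by
    constructor
    intro a h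
    exact h.1 rfl

instance (s t p : ℕ) : DecidableRel (cliqueJoinCliques s t p).Adj := fun a b =>
  inferInstanceAs (Decidable (_ ∧ _))

/-!
The partition of the vertex set into `U` and `C₁ ∪ C₂` is equitable, with quotient matrix
`[[s - 1, 2p₂], [s, p₂ - 1]]`. Hence every root `μ` of its characteristic polynomial
`x² - (s + p₂ - 2) x + (s - 1)(p₂ - 1) - 2 s p₂` is an eigenvalue of the graph, with an eigenvector
constant on `U` and on `C₁ ∪ C₂`. At `x = -s` this polynomial takes the value
`2s² - 3s + 1 - p₂ = -1 < 0`, so its smaller root lies below `-s`.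
-/

open Matrix Module End

theorem Matrix.mem_spectrum_of_mulVec_eq_smul {n R : Type*} [Fintype n] [DecidableEq n] [Field R]
    {A : Matrix n n R} {μ : R} {v : n → R} (hv : v ≠ 0) (h : A *ᵥ v = μ • v) :
    μ ∈ spectrum R A :=
  spectrum_toLin' A ▸
    (hasEigenvalue_of_hasEigenvector (f := A.toLin') ⟨mem_eigenspace_iff.2 h, hv⟩).mem_spectrum

theorem exists_lt_quadratic_eq_zero {b c x : ℝ} (hx : x ^ 2 + b * x + c < 0) :
    ∃ μ < x, μ ^ 2 + b * μ + c = 0 := by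
  have hdisc : 0 ≤ b ^ 2 - 4 * c := by nlinarith [sq_nonneg (2 * x + b)]
  have hsqrt := Real.sq_sqrt hdisc
  refine ⟨(-b - √(b ^ 2 - 4 * c)) / 2, ?_, by linear_combination hsqrt / 4⟩
  have : |2 * x + b| < √(b ^ 2 - 4 * c) :=
    Real.lt_sqrt_of_sq_lt (by rw [sq_abs]; linarith)
  linarith [le_abs_self (2 * x + b), neg_abs_le (2 * x + b)]

namespace cliqueJoinCliques

variable {s t p : ℕ}

@[simp] theorem adj_inl_inl {u v : Fin s} :
    (cliqueJoinCliques s t p).Adj (.inl u) (.inl v) ↔ u ≠ v := by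
  simp [cliqueJoinCliques, uCliquesProj]

@[simp] theorem adj_inl_inr {u : Fin s} {z : Fin t × Fin p} :
    (cliqueJoinCliques s t p).Adj (.inl u) (.inr z) := by
  simp [cliqueJoinCliques, uCliquesProj]

@[simp] theorem adj_inr_inl {z : Fin t × Fin p} {u : Fin s} :
    (cliqueJoinCliques s t p).Adj (.inr z) (.inl u) := by
  simp [cliqueJoinCliques, uCliquesProj]

@[simp] theorem adj_inr_inr {z w : Fin t × Fin p} :
    (cliqueJoinCliques s t p).Adj (.inr z) (.inr w) ↔ z ≠ w ∧ z.1 = w.1 := by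
  simp [cliqueJoinCliques, uCliquesProj]

theorem adjMatrix_mulVec_inl (a b : ℝ) (u : Fin s) :
    ((cliqueJoinCliques s t p).adjMatrix ℝ *ᵥ Sum.elim (fun _ => a) (fun _ => b)) (.inl u)
      = (s - 1) * a + t * p * b := by
  simp only [mulVec, dotProduct, Fintype.sum_sum_type, SimpleGraph.adjMatrix_apply,
    adj_inl_inl, adj_inl_inr, Sum.elim_inl, Sum.elim_inr, ite_mul, one_mul, zero_mul, if_true]
  rw [Finset.sum_ite, Finset.sum_const_zero, add_zero, Finset.sum_const, Finset.filter_ne]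
  simp [Nat.cast_pred u.pos]

theorem adjMatrix_mulVec_inr (a b : ℝ) (z : Fin t × Fin p) :
    ((cliqueJoinCliques s t p).adjMatrix ℝ *ᵥ Sum.elim (fun _ => a) (fun _ => b)) (.inr z)
      = s * a + (p - 1) * b := by
  have hclique : ({w | z ≠ w ∧ z.1 = w.1} : Finset (Fin t × Fin p)) =
      {z.1} ×ˢ Finset.univ.erase z.2 := by
    ext ⟨i, j⟩
    simp only [Finset.mem_filter, Finset.mem_product, Finset.mem_singleton, Finset.mem_erase,
      Finset.mem_univ]
    grind
  simp only [mulVec, dotProduct, Fintype.sum_sum_type, SimpleGraph.adjMatrix_apply,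
    adj_inr_inl, adj_inr_inr, Sum.elim_inl, Sum.elim_inr, ite_mul, one_mul, zero_mul, if_true]
  rw [Finset.sum_ite, Finset.sum_const_zero, add_zero, Finset.sum_const, hclique]
  simp [Nat.cast_pred z.2.pos]

theorem mem_spectrum_adjMatrix_of_quotient_charpoly_eq_zero (hs : 0 < s) (ht : 0 < t) (hp : 0 < p)
    {μ : ℝ} (hμ : μ ^ 2 - (s + p - 2) * μ + ((s - 1) * (p - 1) - t * p * s) = 0) :
    μ ∈ spectrum ℝ ((cliqueJoinCliques s t p).adjMatrix ℝ) := by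
  refine mem_spectrum_of_mulVec_eq_smul (v := Sum.elim (fun _ => μ - (p - 1)) (fun _ => s))
    (fun hv => ?_) (funext fun x => ?_)
  · have := congrFun hv (.inr (⟨0, ht⟩, ⟨0, hp⟩))
    simp only [Sum.elim_inr, Pi.zero_apply, Nat.cast_eq_zero] at this
    omega
  · cases x with
    | inl u =>
      rw [adjMatrix_mulVec_inl]
      simp only [Pi.smul_apply, Sum.elim_inl, smul_eq_mul]
      linear_combination -hμ
    | inr z =>
      rw [adjMatrix_mulVec_inr]
      simp only [Pi.smul_apply, Sum.elim_inr, smul_eq_mul]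
      ring

end cliqueJoinCliques

theorem statement5 (s : ℕ) (hs : 0 < s) :
    ∃ μ ∈ spectrum ℝ ((cliqueJoinCliques s 2 ((s - 1) * (2 * s - 1) + 1)).adjMatrix ℝ),
      μ < -(s : ℝ) := by
  set p := (s - 1) * (2 * s - 1) + 1
  have hp : (p : ℝ) = 2 * s ^ 2 - 3 * s + 2 := by
    push_cast [p, Nat.cast_sub hs, Nat.cast_sub (show 1 ≤ 2 * s by omega)]
    ring
  obtain ⟨μ, hμs, hμ⟩ := exists_lt_quadratic_eq_zero (x := -(s : ℝ))
    (b := -(s + p - 2)) (c := (s - 1) * (p - 1) - 2 * p * s) (by rw [hp]; nlinarith)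
  refine ⟨μ, cliqueJoinCliques.mem_spectrum_adjMatrix_of_quotient_charpoly_eq_zero hs two_pos
    (Nat.succ_pos _) ?_, hμs⟩
  simp only [Nat.cast_ofNat]
  linear_combination hμ
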